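/- arXiv:2512.01002 — 7 statements merged into one kernel-verified Lean document; each statement's English description precedes it below -/
import Mathlib

section
/- Under hypotheses (H0), (H1), (Hτ), (Hσ) and (HU), let ρ := σ·√(k₀·k₁·τ) and define the error-propagation operator S : H → H by S e := T e − P₀(T e), where T e := ∑_{j=1}^J E_j(K_j(r_j e)). Then ‖S e‖ ≤ ρ‖e‖ for every e ∈ H, and consequently ‖S^n e‖ ≤ ρ^n ‖e‖ for every e ∈ H and every n ∈ ℕ. (This is the abstract Hilbert-space content of the paper's Theorem 1: convergence of the two-level ORAS iteration with rate ρ = σ√(k₀k₁τ).) -/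
/-- Abstract Hilbert-space content of Theorem 1 (convergence of the two-level
ORAS iteration): under (H0), (H1), (Hτ), (Hσ), (HU), with
`ρ = σ * √(k₀ * k₁ * τ)`, the error-propagation operator
`S e = T e - P₀ (T e)` with `T e = ∑ j, E j (K j (r j e))` satisfies
`‖S e‖ ≤ ρ * ‖e‖` and hence `‖S^[n] e‖ ≤ ρ ^ n * ‖e‖`. -/
theorem two_level_ORAS_convergence
    {H : Type*} [NormedAddCommGroup H] [InnerProductSpace ℂ H] [CompleteSpace H]
    {J : ℕ}
    {Ht : Fin J → Type*} [∀ j, NormedAddCommGroup (Ht j)]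
    [∀ j, InnerProductSpace ℂ (Ht j)] [∀ j, CompleteSpace (Ht j)]
    {Hj : Fin J → Type*} [∀ j, NormedAddCommGroup (Hj j)]
    [∀ j, InnerProductSpace ℂ (Hj j)] [∀ j, CompleteSpace (Hj j)]
    (r : ∀ j, H →L[ℂ] Ht j) (K : ∀ j, Ht j →L[ℂ] Hj j) (E : ∀ j, Hj j →L[ℂ] H)
    (Proj : ∀ j, Ht j →ₗ[ℂ] Ht j)
    (k₀ k₁ τ σ : ℝ) (hk₀ : 0 ≤ k₀) (hk₁ : 0 ≤ k₁) (hτ : 0 ≤ τ) (hσ : 0 ≤ σ)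
    (hProj : ∀ j (v : Ht j), ‖v - Proj j v‖ ≤ ‖v‖)
    (H0 : ∀ u : ∀ j, Hj j, ‖∑ j, E j (u j)‖ ^ 2 ≤ k₀ * ∑ j, ‖u j‖ ^ 2)
    (H1 : ∀ u : H, ∑ j, ‖r j u‖ ^ 2 ≤ k₁ * ‖u‖ ^ 2)
    (Hτ : ∀ j (v : Ht j), ‖K j (v - Proj j v)‖ ^ 2 ≤ τ * ‖v - Proj j v‖ ^ 2)
    (P₀ : H →ₗ[ℂ] H)
    (Hσ : ∀ u : H, ‖u - P₀ u‖ ≤ σ * ‖u‖)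
    (HU : ∀ j (v : Ht j), P₀ (E j (K j (Proj j v))) = E j (K j (Proj j v)))
    (ρ : ℝ) (hρ : ρ = σ * Real.sqrt (k₀ * k₁ * τ))
    (T S : H → H)
    (hT : ∀ e, T e = ∑ j, E j (K j (r j e)))
    (hS : ∀ e, S e = T e - P₀ (T e)) :
    (∀ e : H, ‖S e‖ ≤ ρ * ‖e‖) ∧
      ∀ (e : H) (n : ℕ), ‖S^[n] e‖ ≤ ρ ^ n * ‖e‖ := by
  have hρ0 : 0 ≤ ρ := by
    rw [hρ]; exact mul_nonneg hσ (Real.sqrt_nonneg _)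
  have main : ∀ e : H, ‖S e‖ ≤ ρ * ‖e‖ := by
    intro e
    set w : ∀ j, Ht j := fun j => r j e - Proj j (r j e) with hw
    set D : H := ∑ j, E j (K j (w j)) with hD
    have hsplit : T e = (∑ j, E j (K j (Proj j (r j e)))) + D := by
      rw [hT, hD, ← Finset.sum_add_distrib]
      refine Finset.sum_congr rfl fun j _ => ?_
      rw [← map_add, ← map_add]
      congr 1
      simp [hw]
    have hPC : P₀ (∑ j, E j (K j (Proj j (r j e)))) =
        ∑ j, E j (K j (Proj j (r j e))) := by
      rw [map_sum]
      exact Finset.sum_congr rfl fun j _ => HU j (r j e)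
    have hSe : S e = D - P₀ D := by
      rw [hS, hsplit, map_add, hPC]
      abel
    have hD2 : ‖D‖ ^ 2 ≤ k₀ * k₁ * τ * ‖e‖ ^ 2 := by
      have h0 := H0 (fun j => K j (w j))
      have h1 : ∑ j, ‖K j (w j)‖ ^ 2 ≤ τ * ∑ j, ‖r j e‖ ^ 2 := by
        rw [Finset.mul_sum]
        refine Finset.sum_le_sum fun j _ => ?_
        refine le_trans (Hτ j (r j e)) ?_
        have := hProj j (r j e)
        have hnn : (0:ℝ) ≤ ‖r j e - Proj j (r j e)‖ := norm_nonneg _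
        have : ‖r j e - Proj j (r j e)‖ ^ 2 ≤ ‖r j e‖ ^ 2 :=
          pow_le_pow_left₀ hnn (hProj j (r j e)) 2
        exact mul_le_mul_of_nonneg_left this hτ
      have h2 : τ * ∑ j, ‖r j e‖ ^ 2 ≤ τ * (k₁ * ‖e‖ ^ 2) :=
        mul_le_mul_of_nonneg_left (H1 e) hτ
      calc ‖D‖ ^ 2 ≤ k₀ * ∑ j, ‖K j (w j)‖ ^ 2 := h0
        _ ≤ k₀ * (τ * (k₁ * ‖e‖ ^ 2)) :=
          mul_le_mul_of_nonneg_left (le_trans h1 h2) hk₀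
        _ = k₀ * k₁ * τ * ‖e‖ ^ 2 := by ring
    have hDle : ‖D‖ ≤ Real.sqrt (k₀ * k₁ * τ) * ‖e‖ := by
      have := Real.sqrt_le_sqrt hD2
      rwa [Real.sqrt_sq (norm_nonneg D), Real.sqrt_mul
        (by positivity : (0:ℝ) ≤ k₀ * k₁ * τ), Real.sqrt_sq (norm_nonneg e)] at this
    calc ‖S e‖ = ‖D - P₀ D‖ := by rw [hSe]
      _ ≤ σ * ‖D‖ := Hσ D
      _ ≤ σ * (Real.sqrt (k₀ * k₁ * τ) * ‖e‖) :=
          mul_le_mul_of_nonneg_left hDle hσ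
      _ = ρ * ‖e‖ := by rw [hρ]; ring
  refine ⟨main, fun e n => ?_⟩
  induction n generalizing e with
  | zero => simp
  | succ n ih =>
    rw [Function.iterate_succ_apply]
    calc ‖S^[n] (S e)‖ ≤ ρ ^ n * ‖S e‖ := ih (S e)
      _ ≤ ρ ^ n * (ρ * ‖e‖) :=
          mul_le_mul_of_nonneg_left (main e) (pow_nonneg hρ0 n)
      _ = ρ ^ (n+1) * ‖e‖ := by ring
end

section
/- Under hypotheses (H0), (H1) and (Hτ), for every u ∈ H one has ‖∑_{j=1}^J E_j(K_j(r_j u − Π_j(r_j u)))‖² ≤ k₀·k₁·τ·‖u‖². (This is the key two-level error estimate, equation (error_est_lvl2) of the paper, before applying the coarse projection.) -/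
/-- Two-level error estimate (error_est_lvl2), before applying the coarse
projection: under (H0), (H1), (Hτ), for every `u`,
`‖∑ j, E j (K j ((1 - Π j) (r j u)))‖² ≤ k₀ * k₁ * τ * ‖u‖²`. -/
theorem two_level_error_estimate
    {H : Type*} [NormedAddCommGroup H] [InnerProductSpace ℂ H] [CompleteSpace H]
    {J : ℕ}
    {Ht : Fin J → Type*} [∀ j, NormedAddCommGroup (Ht j)]
    [∀ j, InnerProductSpace ℂ (Ht j)] [∀ j, CompleteSpace (Ht j)]
    {Hj : Fin J → Type*} [∀ j, NormedAddCommGroup (Hj j)]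
    [∀ j, InnerProductSpace ℂ (Hj j)] [∀ j, CompleteSpace (Hj j)]
    (r : ∀ j, H →L[ℂ] Ht j) (K : ∀ j, Ht j →L[ℂ] Hj j) (E : ∀ j, Hj j →L[ℂ] H)
    (Proj : ∀ j, Ht j →ₗ[ℂ] Ht j)
    (k₀ k₁ τ : ℝ) (hk₀ : 0 ≤ k₀) (hk₁ : 0 ≤ k₁) (hτ : 0 ≤ τ)
    (hProj : ∀ j (v : Ht j), ‖v - Proj j v‖ ≤ ‖v‖)
    (H0 : ∀ u : ∀ j, Hj j, ‖∑ j, E j (u j)‖ ^ 2 ≤ k₀ * ∑ j, ‖u j‖ ^ 2)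
    (H1 : ∀ u : H, ∑ j, ‖r j u‖ ^ 2 ≤ k₁ * ‖u‖ ^ 2)
    (Hτ : ∀ j (v : Ht j), ‖K j (v - Proj j v)‖ ^ 2 ≤ τ * ‖v - Proj j v‖ ^ 2)
    (u : H) :
    ‖∑ j, E j (K j (r j u - Proj j (r j u)))‖ ^ 2 ≤ k₀ * k₁ * τ * ‖u‖ ^ 2 := by
  calc ‖∑ j, E j (K j (r j u - Proj j (r j u)))‖ ^ 2
      ≤ k₀ * ∑ j, ‖K j (r j u - Proj j (r j u))‖ ^ 2 := H0 _
    _ ≤ k₀ * ∑ j, τ * ‖r j u‖ ^ 2 := by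
        apply mul_le_mul_of_nonneg_left _ hk₀
        apply Finset.sum_le_sum
        intro j _
        calc ‖K j (r j u - Proj j (r j u))‖ ^ 2
            ≤ τ * ‖r j u - Proj j (r j u)‖ ^ 2 := Hτ j _
          _ ≤ τ * ‖r j u‖ ^ 2 := by
              apply mul_le_mul_of_nonneg_left _ hτ
              exact pow_le_pow_left₀ (norm_nonneg _) (hProj j _) 2
    _ = k₀ * τ * ∑ j, ‖r j u‖ ^ 2 := by rw [← Finset.mul_sum]; ring
    _ ≤ k₀ * τ * (k₁ * ‖u‖ ^ 2) := by
        exact mul_le_mul_of_nonneg_left (H1 u) (mul_nonneg hk₀ hτ)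
    _ = k₀ * k₁ * τ * ‖u‖ ^ 2 := by ring
end

section
/- Let X be a normed space over ℂ, let H be a complete normed space over ℂ, let L be a normed space over ℂ, let K : X → L be a continuous linear map that is a compact operator, let B : X → H be a linear map, and let C ≥ 0 be such that ‖B u‖ ≤ C‖K u‖ for all u ∈ X. Then B is a compact operator. (This is the abstract core of the paper's Proposition 1: the operator u ↦ χ_j R_j u is compact from H¹(Ω̃_j) to H¹(Ω_j) because, by the Caccioppoli inequality, its norm is dominated by the L²-norm of R_j u, and R_j followed by the embedding H¹(Ω_j) ↪ L²(Ω_j) is compact by Rellich–Kondrachov.) -/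
/-- Abstract core of Proposition 1: if `K : X →L[ℂ] L` is a compact operator,
`B : X →ₗ[ℂ] H` is linear with values in a complete space, and
`‖B u‖ ≤ C * ‖K u‖` for all `u`, then `B` is a compact operator. -/
theorem compact_of_dominated_by_compact
    {X H L : Type*}
    [NormedAddCommGroup X] [NormedSpace ℂ X]
    [NormedAddCommGroup H] [NormedSpace ℂ H] [CompleteSpace H]
    [NormedAddCommGroup L] [NormedSpace ℂ L]
    (K : X →L[ℂ] L) (hK : IsCompactOperator K)
    (B : X →ₗ[ℂ] H) (C : ℝ) (hC : 0 ≤ C)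
    (hdom : ∀ u : X, ‖B u‖ ≤ C * ‖K u‖) :
    IsCompactOperator B := by
  obtain ⟨V, hV, hVc⟩ :=
    (isCompactOperator_iff_exists_mem_nhds_isCompact_closure_image K).mp hK
  have hKtb : TotallyBounded (K '' V) := hVc.totallyBounded.subset subset_closure
  have htb : TotallyBounded (B '' V) := by
    rw [Metric.totallyBounded_iff]
    intro ε hε
    have hδ : (0:ℝ) < ε / (C + 1) := by positivity
    obtain ⟨t, hts, htf, hcov⟩ := totallyBounded_iff_subset.mp hKtb
        {p : L × L | dist p.1 p.2 < ε / (C + 1)} (Metric.dist_mem_uniformity hδ)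
    choose! g hgV hgK using fun y (hy : y ∈ t) => hts hy
    refine ⟨(B ∘ g) '' t, htf.image _, ?_⟩
    rintro _ ⟨u, huV, rfl⟩
    obtain ⟨y, hyt, hy⟩ := Set.mem_iUnion₂.mp (hcov ⟨u, huV, rfl⟩)
    refine Set.mem_iUnion₂.mpr ⟨B (g y), ⟨y, hyt, rfl⟩, ?_⟩
    have hdist : dist (K u) y < ε / (C + 1) := hy
    have h1 : dist (B u) (B (g y)) ≤ C * dist (K u) y := by
      rw [dist_eq_norm, ← map_sub]
      calc ‖B (u - g y)‖ ≤ C * ‖K (u - g y)‖ := hdom _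
        _ = C * dist (K u) y := by rw [map_sub, ← dist_eq_norm, hgK y hyt]
    have h2 : C * dist (K u) y < ε := by
      calc C * dist (K u) y ≤ C * (ε / (C + 1)) := by
            exact mul_le_mul_of_nonneg_left (le_of_lt hdist) hC
        _ < ε := by
            rw [mul_div_assoc']
            rw [div_lt_iff₀ (by linarith)]
            nlinarith
    exact Metric.mem_ball.mpr (lt_of_le_of_lt h1 h2)
  refine ⟨closure (B '' V),
    TotallyBounded.isCompact_of_isClosed htb.closure isClosed_closure, ?_⟩
  exact Filter.mem_of_superset hV fun u hu =>
    subset_closure ⟨u, hu, rfl⟩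
end

section
/- Suppose that the real part of ∫_Ω μ(x) ∑_{k=1}^d ∂_k v(x) · conj(∂_k(χ²v)(x)) dx − ω² ∫_Ω ν(x) χ(x)² |v(x)|² dx equals zero (this is the real part of the identity b_{Ω_j}(v, χ²v) = 0, the boundary terms being purely imaginary). Then ∫_Ω μ(x) ∑_{k=1}^d |∂_k(χv)(x)|² dx + ω² ∫_Ω ν(x) χ(x)² |v(x)|² dx = ∫_Ω μ(x) |v(x)|² ‖∇χ(x)‖² dx + 2ω² ∫_Ω ν(x) χ(x)² |v(x)|² dx. (This is the Caccioppoli-type identity established in the proof of Proposition 1.) -/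
/-!
Pointwise, `|χ ∂ₖv + (∂ₖχ) v|² = Re (∂ₖv · conj ∂ₖ(χ²v)) + (∂ₖχ)² |v|²`. Integrating against `μ`
and replacing the real part of the sesquilinear term by `ω² ∫ ν χ² |v|²` (the hypothesis) gives the
identity. The only analytic point is that the sesquilinear integrand is integrable, so that its
integral commutes with `Re`; by Cauchy–Schwarz it is dominated by `μ χ² ‖∇v‖² + 2 μ χ |v| ‖∇χ‖ ‖∇v‖`.
-/

open MeasureTheory

open ComplexConjugate

namespace Complex

theorem sq_norm_ofReal_mul_add_ofReal_mul (a b : ℂ) (c e : ℝ) :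
    ‖(c : ℂ) * a + (e : ℂ) * b‖ ^ 2 =
      (a * conj ((c : ℂ) ^ 2 * a + 2 * (c : ℂ) * (e : ℂ) * b)).re + e ^ 2 * ‖b‖ ^ 2 := by
  simp only [Complex.sq_norm, normSq_apply, mul_re, mul_im, add_re, add_im, conj_re, conj_im,
    ofReal_re, ofReal_im, re_ofNat, im_ofNat, ← ofReal_pow]
  ring

theorem mul_sum_sq_norm_ofReal_mul_add_ofReal_mul {ι : Type*} [Fintype ι] (m c : ℝ) (b : ℂ)
    (a : ι → ℂ) (e : ι → ℝ) :
    m * ∑ k, ‖(c : ℂ) * a k + (e k : ℂ) * b‖ ^ 2 =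
      ((m : ℂ) * ∑ k, a k * conj ((c : ℂ) ^ 2 * a k + 2 * (c : ℂ) * (e k : ℂ) * b)).re +
        m * ‖b‖ ^ 2 * ∑ k, e k ^ 2 := by
  simp only [sq_norm_ofReal_mul_add_ofReal_mul, Finset.sum_add_distrib, re_ofReal_mul, re_sum,
    mul_add, Finset.mul_sum]
  exact congrArg _ (Finset.sum_congr rfl fun k _ => by ring)

theorem norm_sum_mul_conj_le {ι : Type*} [Fintype ι] (a : ι → ℂ) (b : ℂ) (c : ℝ) (e : ι → ℝ) :
    ‖∑ k, a k * conj ((c : ℂ) ^ 2 * a k + 2 * (c : ℂ) * (e k : ℂ) * b)‖ ≤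
      c ^ 2 * ∑ k, ‖a k‖ ^ 2 + 2 * (|c| * ‖b‖ * √(∑ k, e k ^ 2) * √(∑ k, ‖a k‖ ^ 2)) := by
  have hterm : ∀ k, ‖a k * conj ((c : ℂ) ^ 2 * a k + 2 * (c : ℂ) * (e k : ℂ) * b)‖ ≤
      c ^ 2 * ‖a k‖ ^ 2 + 2 * (|c| * ‖b‖) * (|e k| * ‖a k‖) := by
    intro k
    rw [norm_mul, RCLike.norm_conj]
    calc ‖a k‖ * ‖(c : ℂ) ^ 2 * a k + 2 * (c : ℂ) * (e k : ℂ) * b‖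
        ≤ ‖a k‖ * (‖(c : ℂ) ^ 2 * a k‖ + ‖2 * (c : ℂ) * (e k : ℂ) * b‖) :=
          mul_le_mul_of_nonneg_left (norm_add_le _ _) (norm_nonneg _)
      _ = _ := by
          simp only [norm_mul, norm_pow, norm_real, Real.norm_eq_abs, sq_abs, Complex.norm_ofNat]
          ring
  have hcs : ∑ k, |e k| * ‖a k‖ ≤ √(∑ k, e k ^ 2) * √(∑ k, ‖a k‖ ^ 2) := by
    simpa only [sq_abs] using
      Real.sum_mul_le_sqrt_mul_sqrt Finset.univ (fun k => |e k|) (fun k => ‖a k‖)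
  calc _ ≤ ∑ k, (c ^ 2 * ‖a k‖ ^ 2 + 2 * (|c| * ‖b‖) * (|e k| * ‖a k‖)) :=
        (norm_sum_le _ _).trans (Finset.sum_le_sum fun k _ => hterm k)
    _ = c ^ 2 * ∑ k, ‖a k‖ ^ 2 + 2 * (|c| * ‖b‖) * ∑ k, |e k| * ‖a k‖ := by
        rw [Finset.sum_add_distrib, Finset.mul_sum, Finset.mul_sum]
    _ ≤ _ := by
        have : 0 ≤ |c| * ‖b‖ := by positivity
        nlinarith [mul_le_mul_of_nonneg_left hcs this]

end Complex

section Integrals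

variable {α ι : Type*} [MeasurableSpace α] {ρ : Measure α} [Fintype ι]
  {μ χ : α → ℝ} {v : α → ℂ} {dv : ι → α → ℂ} {dχ : ι → α → ℝ}

theorem integrable_mul_sum_mul_conj (hμ : Measurable μ) (hχm : Measurable χ)
    (hvm : Measurable v) (hdvm : ∀ k, Measurable (dv k)) (hdχm : ∀ k, Measurable (dχ k))
    (hI1 : Integrable (fun x => μ x * χ x ^ 2 * ∑ k, ‖dv k x‖ ^ 2) ρ)
    (hI3 : Integrable (fun x => μ x * χ x * ‖v x‖ *
        √(∑ k, dχ k x ^ 2) * √(∑ k, ‖dv k x‖ ^ 2)) ρ) :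
    Integrable (fun x => (μ x : ℂ) *
      ∑ k, dv k x * conj ((χ x : ℂ) ^ 2 * dv k x + 2 * (χ x : ℂ) * (dχ k x : ℂ) * v x)) ρ := by
  refine (hI1.abs.add (hI3.abs.const_mul 2)).mono' (by fun_prop) (ae_of_all _ fun x => ?_)
  rw [norm_mul, Complex.norm_real, Real.norm_eq_abs]
  calc _ ≤ |μ x| * (χ x ^ 2 * ∑ k, ‖dv k x‖ ^ 2 + 2 * (|χ x| * ‖v x‖ *
        √(∑ k, dχ k x ^ 2) * √(∑ k, ‖dv k x‖ ^ 2))) :=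
      mul_le_mul_of_nonneg_left (Complex.norm_sum_mul_conj_le _ _ _ _) (abs_nonneg _)
    _ = _ := by
      simp only [abs_mul, abs_pow, sq_abs, abs_of_nonneg (norm_nonneg _),
        abs_of_nonneg (Real.sqrt_nonneg _),
        abs_of_nonneg (by positivity : 0 ≤ ∑ k, ‖dv k x‖ ^ 2), Pi.add_apply]
      ring

theorem integral_mul_sum_sq_norm_eq (hμ : Measurable μ) (hχm : Measurable χ)
    (hvm : Measurable v) (hdvm : ∀ k, Measurable (dv k)) (hdχm : ∀ k, Measurable (dχ k))
    (hI1 : Integrable (fun x => μ x * χ x ^ 2 * ∑ k, ‖dv k x‖ ^ 2) ρ)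
    (hI2 : Integrable (fun x => μ x * ‖v x‖ ^ 2 * ∑ k, dχ k x ^ 2) ρ)
    (hI3 : Integrable (fun x => μ x * χ x * ‖v x‖ *
        √(∑ k, dχ k x ^ 2) * √(∑ k, ‖dv k x‖ ^ 2)) ρ) :
    ∫ x, μ x * ∑ k, ‖(χ x : ℂ) * dv k x + (dχ k x : ℂ) * v x‖ ^ 2 ∂ρ =
      (∫ x, (μ x : ℂ) *
        ∑ k, dv k x * conj ((χ x : ℂ) ^ 2 * dv k x + 2 * (χ x : ℂ) * (dχ k x : ℂ) * v x) ∂ρ).re +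
      ∫ x, μ x * ‖v x‖ ^ 2 * ∑ k, dχ k x ^ 2 ∂ρ := by
  have hW := integrable_mul_sum_mul_conj hμ hχm hvm hdvm hdχm hI1 hI3
  rw [← RCLike.re_to_complex, ← integral_re hW, ← integral_add hW.re hI2]
  congr 1 with x
  exact Complex.mul_sum_sq_norm_ofReal_mul_add_ofReal_mul _ _ _ _ _

end Integrals

theorem caccioppoli_identity_general
    {d : ℕ} (Ω : Set (Fin d → ℝ))
    (μ ν : (Fin d → ℝ) → ℝ) (hμ : Measurable μ)
    (ω : ℝ)
    (v : (Fin d → ℝ) → ℂ) (dv : Fin d → (Fin d → ℝ) → ℂ)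
    (χ : (Fin d → ℝ) → ℝ) (dχ : Fin d → (Fin d → ℝ) → ℝ)
    (hvm : Measurable v) (hdvm : ∀ k, Measurable (dv k))
    (hχm : Measurable χ) (hdχm : ∀ k, Measurable (dχ k))
    -- integrability of μ χ² ‖∇v‖²
    (hI1 : IntegrableOn (fun x => μ x * χ x ^ 2 * ∑ k, ‖dv k x‖ ^ 2) Ω)
    -- integrability of μ |v|² ‖∇χ‖²
    (hI2 : IntegrableOn (fun x => μ x * ‖v x‖ ^ 2 * ∑ k, dχ k x ^ 2) Ω)
    -- integrability of μ χ |v| ‖∇χ‖ ‖∇v‖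
    (hI3 : IntegrableOn (fun x => μ x * χ x * ‖v x‖ *
        Real.sqrt (∑ k, dχ k x ^ 2) * Real.sqrt (∑ k, ‖dv k x‖ ^ 2)) Ω)
    -- real part of the identity b(v, χ²v) = 0
    (hb : (∫ x in Ω, (μ x : ℂ) *
            ∑ k, dv k x *
              (starRingEnd ℂ) ((χ x : ℂ) ^ 2 * dv k x +
                2 * (χ x : ℂ) * (dχ k x : ℂ) * v x)).re -
          ω ^ 2 * ∫ x in Ω, ν x * χ x ^ 2 * ‖v x‖ ^ 2 = 0) :
    (∫ x in Ω, μ x * ∑ k, ‖(χ x : ℂ) * dv k x + (dχ k x : ℂ) * v x‖ ^ 2) +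
      ω ^ 2 * ∫ x in Ω, ν x * χ x ^ 2 * ‖v x‖ ^ 2 =
    (∫ x in Ω, μ x * ‖v x‖ ^ 2 * ∑ k, dχ k x ^ 2) +
      2 * ω ^ 2 * ∫ x in Ω, ν x * χ x ^ 2 * ‖v x‖ ^ 2 := by
  rw [integral_mul_sum_sq_norm_eq hμ hχm hvm hdvm hdχm hI1 hI2 hI3]
  linarith

/-- Caccioppoli-type identity from the proof of Proposition 1.
Here `dv k` and `dχ k` denote the partial derivatives `∂ₖ v` and `∂ₖ χ`, and
by the product rule `∂ₖ(χ²v) = χ² ∂ₖ v + 2χ (∂ₖ χ) v` and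
`∂ₖ(χv) = χ ∂ₖ v + (∂ₖ χ) v`. -/
theorem caccioppoli_identity
    {d : ℕ} (hd : 1 ≤ d) (Ω : Set (Fin d → ℝ)) (hΩ : IsOpen Ω)
    (μ ν : (Fin d → ℝ) → ℝ) (hμ : Measurable μ) (hν : Measurable ν)
    (ω : ℝ) (hω : 0 < ω)
    (v : (Fin d → ℝ) → ℂ) (dv : Fin d → (Fin d → ℝ) → ℂ)
    (χ : (Fin d → ℝ) → ℝ) (dχ : Fin d → (Fin d → ℝ) → ℝ)
    (hv : ∀ k, ∀ x ∈ Ω, HasLineDerivAt ℝ v (dv k x) x (Pi.single k 1))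
    (hχ : ∀ k, ∀ x ∈ Ω, HasLineDerivAt ℝ χ (dχ k x) x (Pi.single k 1))
    (hvm : Measurable v) (hdvm : ∀ k, Measurable (dv k))
    (hχm : Measurable χ) (hdχm : ∀ k, Measurable (dχ k))
    -- integrability of μ χ² ‖∇v‖²
    (hI1 : IntegrableOn (fun x => μ x * χ x ^ 2 * ∑ k, ‖dv k x‖ ^ 2) Ω)
    -- integrability of μ |v|² ‖∇χ‖²
    (hI2 : IntegrableOn (fun x => μ x * ‖v x‖ ^ 2 * ∑ k, dχ k x ^ 2) Ω)
    -- integrability of μ χ |v| ‖∇χ‖ ‖∇v‖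
    (hI3 : IntegrableOn (fun x => μ x * χ x * ‖v x‖ *
        Real.sqrt (∑ k, dχ k x ^ 2) * Real.sqrt (∑ k, ‖dv k x‖ ^ 2)) Ω)
    -- integrability of ν χ² |v|²
    (hI4 : IntegrableOn (fun x => ν x * χ x ^ 2 * ‖v x‖ ^ 2) Ω)
    -- real part of the identity b(v, χ²v) = 0
    (hb : (∫ x in Ω, (μ x : ℂ) *
            ∑ k, dv k x *
              (starRingEnd ℂ) ((χ x : ℂ) ^ 2 * dv k x +
                2 * (χ x : ℂ) * (dχ k x : ℂ) * v x)).re -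
          ω ^ 2 * ∫ x in Ω, ν x * χ x ^ 2 * ‖v x‖ ^ 2 = 0) :
    (∫ x in Ω, μ x * ∑ k, ‖(χ x : ℂ) * dv k x + (dχ k x : ℂ) * v x‖ ^ 2) +
      ω ^ 2 * ∫ x in Ω, ν x * χ x ^ 2 * ‖v x‖ ^ 2 =
    (∫ x in Ω, μ x * ‖v x‖ ^ 2 * ∑ k, dχ k x ^ 2) +
      2 * ω ^ 2 * ∫ x in Ω, ν x * χ x ^ 2 * ‖v x‖ ^ 2 :=
  caccioppoli_identity_general Ω μ ν hμ ω v dv χ dχ hvm hdvm hχm hdχm hI1 hI2 hI3 hb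
end

section
/- Suppose that the real part of ∫_Ω μ(x) ∑_{k=1}^d ∂_k v(x) · conj(∂_k(χ²v)(x)) dx − ω² ∫_Ω ν(x) χ(x)² |v(x)|² dx equals zero, and suppose in addition that 0 ≤ μ(x) ≤ μ⁺, 0 ≤ ν(x) ≤ ν⁺, ‖∇χ(x)‖ ≤ G and χ(x)² ≤ X² for all x ∈ Ω, where μ⁺, ν⁺, G, X are nonnegative reals. Then ∫_Ω μ(x) ∑_{k=1}^d |∂_k(χv)(x)|² dx + ω² ∫_Ω ν(x) χ(x)² |v(x)|² dx ≤ (μ⁺ G² + 2 ω² ν⁺ X²) ∫_Ω |v(x)|² dx. (This is the Caccioppoli inequality from the proof of Proposition 1: the weighted H¹-type energy of χv is controlled by the L²-norm of v.) -/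
/-!
Expanding the conjugate gives the pointwise identity
`Re (∂ₖv · conj ∂ₖ(χ²v)) = |∂ₖ(χv)|² - |∂ₖχ|² |v|²`, so the hypothesis becomes the energy identity
`∫ μ |∇(χv)|² = ω² ∫ ν χ² |v|² + ∫ μ |v|² |∇χ|²`, and both terms on the right are bounded by the
coefficient bounds times `∫ |v|²`. The only analytic input is the integrability of the sesquilinear
integrand, which follows from Cauchy–Schwarz in the sum over `k`.
-/

open MeasureTheory ComplexConjugate Finset

section Pointwise

variable {ι : Type*} [Fintype ι]

theorem re_mul_conj_sq_mul_add (c e : ℝ) (z w : ℂ) :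
    (z * conj ((c : ℂ) ^ 2 * z + 2 * (c : ℂ) * (e : ℂ) * w)).re =
      ‖(c : ℂ) * z + (e : ℂ) * w‖ ^ 2 - e ^ 2 * ‖w‖ ^ 2 := by
  simp only [Complex.sq_norm, Complex.normSq_apply, Complex.mul_re, Complex.mul_im,
    Complex.add_re, Complex.add_im, Complex.conj_re, Complex.conj_im, Complex.ofReal_re,
    Complex.ofReal_im, Complex.re_ofNat, Complex.im_ofNat, ← Complex.ofReal_pow]
  ring

theorem re_ofReal_mul_sum_mul_conj (a c : ℝ) (e : ι → ℝ) (z : ι → ℂ) (w : ℂ) :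
    ((a : ℂ) * ∑ k, z k * conj ((c : ℂ) ^ 2 * z k + 2 * (c : ℂ) * (e k : ℂ) * w)).re =
      a * ∑ k, ‖(c : ℂ) * z k + (e k : ℂ) * w‖ ^ 2 - a * ‖w‖ ^ 2 * ∑ k, e k ^ 2 := by
  simp only [Complex.re_ofReal_mul, Complex.re_sum, re_mul_conj_sq_mul_add, sum_sub_distrib,
    ← sum_mul]
  ring

theorem norm_sum_mul_conj_le (c : ℝ) (e : ι → ℝ) (z : ι → ℂ) (w : ℂ) :
    ‖∑ k, z k * conj ((c : ℂ) ^ 2 * z k + 2 * (c : ℂ) * (e k : ℂ) * w)‖ ≤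
      c ^ 2 * ∑ k, ‖z k‖ ^ 2 + 2 * (|c| * ‖w‖ * √(∑ k, e k ^ 2) * √(∑ k, ‖z k‖ ^ 2)) := by
  have cauchy_schwarz := Real.sum_mul_le_sqrt_mul_sqrt univ (fun k => |e k|) (fun k => ‖z k‖)
  simp only [sq_abs] at cauchy_schwarz
  calc _ ≤ ∑ k, ‖z k‖ * (c ^ 2 * ‖z k‖ + 2 * |c| * |e k| * ‖w‖) := by
        refine (norm_sum_le _ _).trans (sum_le_sum fun k _ => ?_)
        rw [norm_mul, Complex.norm_conj]
        gcongr
        refine (norm_add_le _ _).trans_eq ?_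
        simp [← Complex.ofReal_pow]
    _ = c ^ 2 * ∑ k, ‖z k‖ ^ 2 + 2 * |c| * ‖w‖ * ∑ k, |e k| * ‖z k‖ := by
        simp only [mul_add, sum_add_distrib, mul_sum]
        congr 1 <;> exact sum_congr rfl fun k _ => by ring
    _ ≤ c ^ 2 * ∑ k, ‖z k‖ ^ 2 + 2 * |c| * ‖w‖ * (√(∑ k, e k ^ 2) * √(∑ k, ‖z k‖ ^ 2)) := by
        gcongr
    _ = _ := by ring

end Pointwise

section Integral

variable {α ι : Type*} [Fintype ι] [MeasurableSpace α] {m : Measure α}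
  {a c : α → ℝ} {e : ι → α → ℝ} {z : ι → α → ℂ} {w : α → ℂ}

theorem integrable_ofReal_mul_sum_mul_conj (ha : Measurable a) (hc : Measurable c)
    (he : ∀ k, Measurable (e k)) (hz : ∀ k, Measurable (z k)) (hw : Measurable w)
    (ha_nonneg : ∀ᵐ x ∂m, 0 ≤ a x)
    (h_sq : Integrable (fun x => a x * c x ^ 2 * ∑ k, ‖z k x‖ ^ 2) m)
    (h_cross : Integrable (fun x => a x * c x * ‖w x‖ *
      √(∑ k, e k x ^ 2) * √(∑ k, ‖z k x‖ ^ 2)) m) :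
    Integrable (fun x => (a x : ℂ) *
      ∑ k, z k x * conj ((c x : ℂ) ^ 2 * z k x + 2 * (c x : ℂ) * (e k x : ℂ) * w x)) m := by
  refine (h_sq.add (h_cross.norm.const_mul 2)).mono' (by fun_prop) ?_
  filter_upwards [ha_nonneg] with x hx
  rw [norm_mul, Complex.norm_real, Real.norm_of_nonneg hx]
  refine (mul_le_mul_of_nonneg_left (norm_sum_mul_conj_le _ _ _ _) hx).trans_eq ?_
  simp only [Pi.add_apply, Real.norm_eq_abs, abs_mul, abs_of_nonneg hx, abs_norm,
    abs_of_nonneg (Real.sqrt_nonneg _)]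
  ring

theorem integral_ofReal_mul_sum_norm_sq_eq
    (hF : Integrable (fun x => (a x : ℂ) *
      ∑ k, z k x * conj ((c x : ℂ) ^ 2 * z k x + 2 * (c x : ℂ) * (e k x : ℂ) * w x)) m)
    (hg : Integrable (fun x => a x * ‖w x‖ ^ 2 * ∑ k, e k x ^ 2) m) :
    ∫ x, a x * ∑ k, ‖(c x : ℂ) * z k x + (e k x : ℂ) * w x‖ ^ 2 ∂m =
      (∫ x, (a x : ℂ) *
        ∑ k, z k x * conj ((c x : ℂ) ^ 2 * z k x + 2 * (c x : ℂ) * (e k x : ℂ) * w x) ∂m).re +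
      ∫ x, a x * ‖w x‖ ^ 2 * ∑ k, e k x ^ 2 ∂m := by
  rw [← RCLike.re_to_complex, ← integral_re hF, ← integral_add hF.re hg]
  simp only [RCLike.re_to_complex, re_ofReal_mul_sum_mul_conj, sub_add_cancel]

end Integral

theorem caccioppoli_inequality_general
    {d : ℕ} (Ω : Set (Fin d → ℝ)) (hΩ : IsOpen Ω)
    (μ ν : (Fin d → ℝ) → ℝ) (hμ : Measurable μ)
    (ω : ℝ)
    (v : (Fin d → ℝ) → ℂ) (dv : Fin d → (Fin d → ℝ) → ℂ)
    (χ : (Fin d → ℝ) → ℝ) (dχ : Fin d → (Fin d → ℝ) → ℝ)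
    (hvm : Measurable v) (hdvm : ∀ k, Measurable (dv k))
    (hχm : Measurable χ) (hdχm : ∀ k, Measurable (dχ k))
    -- integrability of μ χ² ‖∇v‖²
    (hI1 : IntegrableOn (fun x => μ x * χ x ^ 2 * ∑ k, ‖dv k x‖ ^ 2) Ω)
    -- integrability of μ |v|² ‖∇χ‖²
    (hI2 : IntegrableOn (fun x => μ x * ‖v x‖ ^ 2 * ∑ k, dχ k x ^ 2) Ω)
    -- integrability of μ χ |v| ‖∇χ‖ ‖∇v‖
    (hI3 : IntegrableOn (fun x => μ x * χ x * ‖v x‖ *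
        Real.sqrt (∑ k, dχ k x ^ 2) * Real.sqrt (∑ k, ‖dv k x‖ ^ 2)) Ω)
    -- integrability of ν χ² |v|²
    (hI4 : IntegrableOn (fun x => ν x * χ x ^ 2 * ‖v x‖ ^ 2) Ω)
    -- integrability of |v|²
    (hI5 : IntegrableOn (fun x => ‖v x‖ ^ 2) Ω)
    -- real part of the identity b(v, χ²v) = 0
    (hb : (∫ x in Ω, (μ x : ℂ) *
            ∑ k, dv k x *
              (starRingEnd ℂ) ((χ x : ℂ) ^ 2 * dv k x +
                2 * (χ x : ℂ) * (dχ k x : ℂ) * v x)).re -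
          ω ^ 2 * ∫ x in Ω, ν x * χ x ^ 2 * ‖v x‖ ^ 2 = 0)
    -- pointwise bounds on the coefficients and the cut-off
    (μp νp G X : ℝ)
    (hμb : ∀ x ∈ Ω, 0 ≤ μ x ∧ μ x ≤ μp)
    (hνb : ∀ x ∈ Ω, 0 ≤ ν x ∧ ν x ≤ νp)
    (hGb : ∀ x ∈ Ω, Real.sqrt (∑ k, dχ k x ^ 2) ≤ G)
    (hXb : ∀ x ∈ Ω, χ x ^ 2 ≤ X ^ 2) :
    (∫ x in Ω, μ x * ∑ k, ‖(χ x : ℂ) * dv k x + (dχ k x : ℂ) * v x‖ ^ 2) +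
      ω ^ 2 * ∫ x in Ω, ν x * χ x ^ 2 * ‖v x‖ ^ 2 ≤
    (μp * G ^ 2 + 2 * ω ^ 2 * νp * X ^ 2) * ∫ x in Ω, ‖v x‖ ^ 2 := by
  have hΩm := hΩ.measurableSet
  have hF := integrable_ofReal_mul_sum_mul_conj hμ hχm hdχm hdvm hvm
    (ae_restrict_of_forall_mem hΩm fun x hx => (hμb x hx).1) hI1 hI3
  have gradient_term : ∫ x in Ω, μ x * ‖v x‖ ^ 2 * ∑ k, dχ k x ^ 2 ≤
      μp * G ^ 2 * ∫ x in Ω, ‖v x‖ ^ 2 := by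
    rw [← integral_const_mul]
    refine setIntegral_mono_on hI2 (hI5.const_mul _) hΩm fun x hx => ?_
    have hμx := hμb x hx
    have hG2 := (Real.sqrt_le_iff.mp (hGb x hx)).2
    calc μ x * ‖v x‖ ^ 2 * ∑ k, dχ k x ^ 2 ≤ μ x * ‖v x‖ ^ 2 * G ^ 2 :=
          mul_le_mul_of_nonneg_left hG2 (mul_nonneg hμx.1 (sq_nonneg _))
      _ ≤ μp * G ^ 2 * ‖v x‖ ^ 2 := by
          linarith [mul_le_mul_of_nonneg_right hμx.2 (mul_nonneg (sq_nonneg G) (sq_nonneg ‖v x‖))]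
  have mass_term : ∫ x in Ω, ν x * χ x ^ 2 * ‖v x‖ ^ 2 ≤ νp * X ^ 2 * ∫ x in Ω, ‖v x‖ ^ 2 := by
    rw [← integral_const_mul]
    refine setIntegral_mono_on hI4 (hI5.const_mul _) hΩm fun x hx => ?_
    have hνx := hνb x hx
    calc ν x * χ x ^ 2 * ‖v x‖ ^ 2 ≤ ν x * X ^ 2 * ‖v x‖ ^ 2 :=
          mul_le_mul_of_nonneg_right (mul_le_mul_of_nonneg_left (hXb x hx) hνx.1) (sq_nonneg _)
      _ ≤ νp * X ^ 2 * ‖v x‖ ^ 2 := by gcongr; exact hνx.2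
  rw [integral_ofReal_mul_sum_norm_sq_eq hF hI2]
  linarith [mul_le_mul_of_nonneg_left mass_term (sq_nonneg ω)]

/-- Caccioppoli inequality from the proof of Proposition 1: the weighted
H¹-type energy of `χ v` is controlled by the L²-norm of `v`.
Here `dv k` and `dχ k` denote the partial derivatives `∂ₖ v` and `∂ₖ χ`, and
by the product rule `∂ₖ(χ²v) = χ² ∂ₖ v + 2χ (∂ₖ χ) v` and
`∂ₖ(χv) = χ ∂ₖ v + (∂ₖ χ) v`. -/
theorem caccioppoli_inequality
    {d : ℕ} (hd : 1 ≤ d) (Ω : Set (Fin d → ℝ)) (hΩ : IsOpen Ω)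
    (μ ν : (Fin d → ℝ) → ℝ) (hμ : Measurable μ) (hν : Measurable ν)
    (ω : ℝ) (hω : 0 < ω)
    (v : (Fin d → ℝ) → ℂ) (dv : Fin d → (Fin d → ℝ) → ℂ)
    (χ : (Fin d → ℝ) → ℝ) (dχ : Fin d → (Fin d → ℝ) → ℝ)
    (hv : ∀ k, ∀ x ∈ Ω, HasLineDerivAt ℝ v (dv k x) x (Pi.single k 1))
    (hχ : ∀ k, ∀ x ∈ Ω, HasLineDerivAt ℝ χ (dχ k x) x (Pi.single k 1))
    (hvm : Measurable v) (hdvm : ∀ k, Measurable (dv k))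
    (hχm : Measurable χ) (hdχm : ∀ k, Measurable (dχ k))
    -- integrability of μ χ² ‖∇v‖²
    (hI1 : IntegrableOn (fun x => μ x * χ x ^ 2 * ∑ k, ‖dv k x‖ ^ 2) Ω)
    -- integrability of μ |v|² ‖∇χ‖²
    (hI2 : IntegrableOn (fun x => μ x * ‖v x‖ ^ 2 * ∑ k, dχ k x ^ 2) Ω)
    -- integrability of μ χ |v| ‖∇χ‖ ‖∇v‖
    (hI3 : IntegrableOn (fun x => μ x * χ x * ‖v x‖ *
        Real.sqrt (∑ k, dχ k x ^ 2) * Real.sqrt (∑ k, ‖dv k x‖ ^ 2)) Ω)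
    -- integrability of ν χ² |v|²
    (hI4 : IntegrableOn (fun x => ν x * χ x ^ 2 * ‖v x‖ ^ 2) Ω)
    -- integrability of |v|²
    (hI5 : IntegrableOn (fun x => ‖v x‖ ^ 2) Ω)
    -- real part of the identity b(v, χ²v) = 0
    (hb : (∫ x in Ω, (μ x : ℂ) *
            ∑ k, dv k x *
              (starRingEnd ℂ) ((χ x : ℂ) ^ 2 * dv k x +
                2 * (χ x : ℂ) * (dχ k x : ℂ) * v x)).re -
          ω ^ 2 * ∫ x in Ω, ν x * χ x ^ 2 * ‖v x‖ ^ 2 = 0)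
    -- pointwise bounds on the coefficients and the cut-off
    (μp νp G X : ℝ) (hμp : 0 ≤ μp) (hνp : 0 ≤ νp) (hG : 0 ≤ G) (hX : 0 ≤ X)
    (hμb : ∀ x ∈ Ω, 0 ≤ μ x ∧ μ x ≤ μp)
    (hνb : ∀ x ∈ Ω, 0 ≤ ν x ∧ ν x ≤ νp)
    (hGb : ∀ x ∈ Ω, Real.sqrt (∑ k, dχ k x ^ 2) ≤ G)
    (hXb : ∀ x ∈ Ω, χ x ^ 2 ≤ X ^ 2) :
    (∫ x in Ω, μ x * ∑ k, ‖(χ x : ℂ) * dv k x + (dχ k x : ℂ) * v x‖ ^ 2) +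
      ω ^ 2 * ∫ x in Ω, ν x * χ x ^ 2 * ‖v x‖ ^ 2 ≤
    (μp * G ^ 2 + 2 * ω ^ 2 * νp * X ^ 2) * ∫ x in Ω, ‖v x‖ ^ 2 :=
  caccioppoli_inequality_general Ω hΩ μ ν hμ ω v dv χ dχ hvm hdvm hχm hdχm hI1 hI2 hI3 hI4 hI5 hb μp
    νp G X hμb hνb hGb hXb
end

section
/- Let H̃ and H be complex Hilbert spaces (complete inner product spaces), let K : H̃ → H be a continuous linear map that is a compact operator, let A := K† ∘ K : H̃ → H̃ where K† denotes the Hilbert-space adjoint of K, and let τ ≥ 0. If u ∈ H̃ is orthogonal to every eigenvector of A associated with a real eigenvalue λ > τ (i.e. ⟨u, e⟩ = 0 whenever e ≠ 0, λ ∈ ℝ, λ > τ and A e = λ • e), then ‖K u‖² ≤ τ ‖u‖². (This is the spectral filtering lemma underlying the coarse-space construction: after removing the high generalized eigenmodes, the local operator is bounded by √τ.) -/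
/-!
Let `V` be the orthogonal complement of the eigenspaces of `A = K† ∘ K` for eigenvalues `> τ`.
Since `A` is symmetric, `V` is `A`-invariant, and `A|_V` is a compact positive operator without
eigenvalues `> τ`. For a compact positive operator `S ≠ 0`, `‖S‖` is the supremum of its Rayleigh
quotient, so `‖S‖` cannot lie in the resolvent set; by the Fredholm alternative it is an
eigenvalue. Hence `‖A|_V‖ ≤ τ`, and `‖K u‖² = re ⟪A u, u⟫ ≤ ‖A|_V‖ ‖u‖²` for `u ∈ V`.
-/

open scoped InnerProductSpace
open Module End

namespace ContinuousLinearMap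

variable {𝕜 E : Type*} [RCLike 𝕜] [NormedAddCommGroup E] [InnerProductSpace 𝕜 E] {T : E →L[𝕜] E}

theorem IsPositive.restrict (hT : T.IsPositive) {V : Submodule 𝕜 E} (hV : ∀ v ∈ V, T v ∈ V) :
    (T.restrict hV).IsPositive :=
  ⟨hT.isSymmetric.restrict_invariant hV, fun x => hT.2 x⟩

def orthogonalEigenspacesAbove (T : E →L[𝕜] E) (τ : ℝ) : Submodule 𝕜 E :=
  (⨆ μ : Set.Ioi τ, eigenspace (T : End 𝕜 E) (μ : ℝ))ᗮ

theorem mem_orthogonalEigenspacesAbove_iff {τ : ℝ} {x : E} :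
    x ∈ T.orthogonalEigenspacesAbove τ ↔
      ∀ e (μ : ℝ), e ≠ 0 → τ < μ → T e = (μ : 𝕜) • e → ⟪x, e⟫_𝕜 = 0 := by
  simp only [orthogonalEigenspacesAbove, ← Submodule.iInf_orthogonal, Submodule.mem_iInf,
    Submodule.mem_orthogonal', mem_eigenspace_iff, Subtype.forall, Set.mem_Ioi]
  constructor
  · exact fun h e μ _ hμ he => h μ hμ e he
  · intro h μ hμ e he
    rcases eq_or_ne e 0 with rfl | he0
    · exact inner_zero_right x
    · exact h e μ he0 hμ he

theorem orthogonalEigenspacesAbove_invariant (hT : T.IsSymmetric) (τ : ℝ) :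
    ∀ x ∈ T.orthogonalEigenspacesAbove τ, T x ∈ T.orthogonalEigenspacesAbove τ := by
  simp only [orthogonalEigenspacesAbove, ← Submodule.iInf_orthogonal]
  exact T.toLinearMap.iInf_invariant fun μ => hT.invariant_orthogonalComplement_eigenspace _

theorem not_hasEigenvalue_restrict_orthogonalEigenspacesAbove (hT : T.IsSymmetric)
    {τ μ : ℝ} (hμ : τ < μ) :
    ¬HasEigenvalue (T.restrict (orthogonalEigenspacesAbove_invariant hT τ)).toLinearMap μ := by
  rw [hasEigenvalue_iff, not_not, toLinearMap_restrict]
  refine eigenspace_restrict_eq_bot _ ((Submodule.orthogonal_disjoint _).mono_right ?_)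
  exact Submodule.orthogonal_le (le_iSup_of_le ⟨μ, hμ⟩ le_rfl)

variable [CompleteSpace E]

instance (T : E →L[𝕜] E) (τ : ℝ) : CompleteSpace (T.orthogonalEigenspacesAbove τ) :=
  (Submodule.isClosed_orthogonal _).completeSpace_coe

theorem IsPositive.hasEigenvalue_norm (hT : T.IsPositive) (hTc : IsCompactOperator T)
    (hT0 : T ≠ 0) : HasEigenvalue (T : End 𝕜 E) (‖T‖ : 𝕜) := by
  have : Nontrivial E := not_subsingleton_iff_nontrivial.mp fun _ => hT0 (Subsingleton.elim _ _)
  refine (hTc.hasEigenvalue_or_mem_resolventSet ?_).resolve_right fun hres => ?_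
  · exact RCLike.ofReal_ne_zero.mpr (norm_ne_zero_iff.mpr hT0)
  obtain ⟨ε, hε, hle⟩ :=
    T.rayleighQuotient_le_of_norm_mem_resolventSet (by rwa [RCLike.algebraMap_eq_ofReal])
  have : ‖T‖ ≤ ‖T‖ - ε := by
    refine (T.norm_eq_iSup_rayleighQuotient hT.isSymmetric).trans_le (ciSup_le fun x => ?_)
    rw [abs_of_nonneg (div_nonneg (hT.2 x) (sq_nonneg _))]
    exact hle x
  linarith

theorem IsPositive.norm_le_of_forall_not_hasEigenvalue (hT : T.IsPositive)
    (hTc : IsCompactOperator T) {τ : ℝ} (hτ : 0 ≤ τ)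
    (h : ∀ μ : ℝ, τ < μ → ¬HasEigenvalue (T : End 𝕜 E) μ) : ‖T‖ ≤ τ := by
  by_contra! hlt
  have hT0 : T ≠ 0 := by
    rintro rfl
    rw [norm_zero] at hlt
    linarith
  exact h _ hlt (hT.hasEigenvalue_norm hTc hT0)

theorem IsPositive.re_inner_le_of_mem_orthogonalEigenspacesAbove (hT : T.IsPositive)
    (hTc : IsCompactOperator T) {τ : ℝ} (hτ : 0 ≤ τ) {x : E}
    (hx : x ∈ T.orthogonalEigenspacesAbove τ) :
    RCLike.re ⟪T x, x⟫_𝕜 ≤ τ * ‖x‖ ^ 2 := by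
  have hV := orthogonalEigenspacesAbove_invariant hT.isSymmetric τ
  set S := T.restrict hV
  have hSτ : ‖S‖ ≤ τ :=
    (hT.restrict hV).norm_le_of_forall_not_hasEigenvalue (hTc.restrict' hV) hτ
      fun _ hμ => not_hasEigenvalue_restrict_orthogonalEigenspacesAbove hT.isSymmetric hμ
  calc RCLike.re ⟪T x, x⟫_𝕜 = RCLike.re ⟪S ⟨x, hx⟩, ⟨x, hx⟩⟫_𝕜 := rfl
    _ ≤ ‖S‖ * ‖x‖ ^ 2 := by
      grw [RCLike.re_le_norm, norm_inner_le_norm, le_opNorm, mul_assoc, ← sq]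
      rfl
    _ ≤ τ * ‖x‖ ^ 2 := by gcongr

end ContinuousLinearMap

/-- Spectral filtering lemma underlying the coarse-space construction:
if `u` is orthogonal to every eigenvector of `A = K† ∘ K` associated with a
real eigenvalue `λ > τ`, then `‖K u‖² ≤ τ ‖u‖²`. -/
theorem spectral_filtering
    {Ht H : Type*}
    [NormedAddCommGroup Ht] [InnerProductSpace ℂ Ht] [CompleteSpace Ht]
    [NormedAddCommGroup H] [InnerProductSpace ℂ H] [CompleteSpace H]
    (K : Ht →L[ℂ] H) (hK : IsCompactOperator K)
    (τ : ℝ) (hτ : 0 ≤ τ) (u : Ht)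
    (hu : ∀ (e : Ht) (lam : ℝ), e ≠ 0 → τ < lam →
      (ContinuousLinearMap.adjoint K ∘L K) e = (lam : ℂ) • e → ⟪u, e⟫_ℂ = 0) :
    ‖K u‖ ^ 2 ≤ τ * ‖u‖ ^ 2 := by
  rw [K.apply_norm_sq_eq_inner_adjoint_left]
  exact K.isPositive_adjoint_comp_self.re_inner_le_of_mem_orthogonalEigenspacesAbove
    (hK.clm_comp (ContinuousLinearMap.adjoint K)) hτ
    (ContinuousLinearMap.mem_orthogonalEigenspacesAbove_iff.mpr hu)
end

section
/- Let (ũ, λ) ∈ Ṽ × ℝ. Then the following are equivalent: (1) m(R ũ, R ũᵗ) = λ · c̃(ũ, ũᵗ) for every ũᵗ ∈ Ṽ; (2) there exist v ∈ V and σ ∈ V such that (a) m(v, vᵗ) = b(vᵗ, σ) for every vᵗ ∈ V, (b) b(v, σᵗ) = g(ũ, σᵗ) for every σᵗ ∈ V, and (c) g(ũᵗ, σ) = λ · c̃(ũ, ũᵗ) for every ũᵗ ∈ Ṽ. (This is the paper's equivalence between the local generalized eigenproblem (equation (gevp)) and its saddle-point formulation (equation (gevp_saddlepoint)); in the paper,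 m is the form c_{Ω_j}(χ_j·, χ_j·), b is the local Robin Helmholtz form, g(ũ, vᵗ) = b_{Ω_j}(ũ|_{Ω_j}, vᵗ) − a_{Ω̃_j}(ũ, (E_j vᵗ)|_{Ω̃_j}), and R = R_j.) -/
/-- Equivalence between the local generalized eigenproblem (gevp) and its
saddle-point formulation (gevp_saddlepoint). The forms `m`, `b`, `c̃` are
sesquilinear (linear in the first argument, conjugate-linear in the second),
`g` is linear in its first argument and conjugate-linear in its second, and
`R` is characterized by `b (R ũ) vᵗ = g ũ vᵗ`. -/
theorem gevp_saddle_point_equivalence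
    {V Vt : Type*} [AddCommGroup V] [Module ℂ V] [AddCommGroup Vt] [Module ℂ Vt]
    (m b : V →ₗ[ℂ] V →ₛₗ[starRingEnd ℂ] ℂ)
    (ct : Vt →ₗ[ℂ] Vt →ₛₗ[starRingEnd ℂ] ℂ)
    (g : Vt →ₗ[ℂ] V →ₛₗ[starRingEnd ℂ] ℂ)
    (R : Vt →ₗ[ℂ] V)
    (hR : ∀ (ut : Vt) (vt : V), b (R ut) vt = g ut vt)
    (hadj : ∀ v : V, ∃ σ : V, ∀ vt : V, m v vt = b vt σ)
    (hnondeg : ∀ v : V, (∀ σt : V, b v σt = 0) → v = 0)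
    (u : Vt) (lam : ℝ) :
    (∀ ut : Vt, m (R u) (R ut) = (lam : ℂ) * ct u ut) ↔
      ∃ v σ : V,
        (∀ vt : V, m v vt = b vt σ) ∧
        (∀ σt : V, b v σt = g u σt) ∧
        (∀ ut : Vt, g ut σ = (lam : ℂ) * ct u ut) := by
  constructor
  · intro h
    obtain ⟨σ, hσ⟩ := hadj (R u)
    exact ⟨R u, σ, hσ, fun σt => hR u σt, fun ut => by
      rw [← hR ut σ, ← hσ (R ut), h ut]⟩
  · rintro ⟨v, σ, ha, hb, hc⟩
    have hv : v = R u := by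
      have h0 : ∀ σt : V, b (v - R u) σt = 0 := fun σt => by
        simp [map_sub, hb σt, hR u σt]
      have := hnondeg _ h0
      rwa [sub_eq_zero] at this
    intro ut
    rw [hv] at ha
    rw [ha (R ut), hR ut σ, hc ut]
end
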